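/- arXiv:1611.09645 — 6 statements merged into one kernel-verified Lean document; each statement's English description precedes it below -/
import Mathlib

section
/- Let (X,d,m) be a doubling metric measure space, let E ⊆ X be a Borel set and let x̄ ∈ X be a point of density 1 for E. Then for every ε > 0 there exists r > 0 such that for every x ∈ B_r(x̄) with x ≠ x̄ there exists y ∈ E with d(x,y) < ε·d(x,x̄). -/
open MeasureTheory Metric Set Filter Topology

/-- In a doubling metric measure space, if `x₀` is a point of density 1
for a Borel set `E`, then for every `ε > 0` there is `r > 0` such that every
`x ∈ B_r(x₀)`, `x ≠ x₀`, admits `y ∈ E` with `d(x,y) < ε · d(x,x₀)`. -/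
theorem stmt0 {X : Type*} [MetricSpace X] [CompleteSpace X] [SecondCountableTopology X]
    [MeasurableSpace X] [BorelSpace X] (m : Measure X)
    (hdoub : ∃ C : NNReal, 0 < C ∧ ∀ (x : X) (r : ℝ), 0 < r →
      0 < m (ball x (2 * r)) ∧ m (ball x (2 * r)) ≤ (C : ENNReal) * m (ball x r) ∧
        m (ball x r) < ⊤)
    (E : Set X) (hE : MeasurableSet E) (x₀ : X)
    (hdens : Tendsto (fun r : ℝ => m (E ∩ ball x₀ r) / m (ball x₀ r)) (𝓝[>] 0) (𝓝 1)) :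
    ∀ ε > (0 : ℝ), ∃ r > (0 : ℝ), ∀ x ∈ ball x₀ r, x ≠ x₀ →
      ∃ y ∈ E, dist x y < ε * dist x x₀ := by
  obtain ⟨C, hC0, hC⟩ := hdoub
  intro ε hε
  set ε' : ℝ := min ε 1 with hε'def
  have hε'0 : 0 < ε' := lt_min hε one_pos
  have hε'1 : ε' ≤ 1 := min_le_right _ _
  have hε'ε : ε' ≤ ε := min_le_left _ _
  -- iterated doubling
  have hiter : ∀ k : ℕ, ∀ x : X, ∀ r : ℝ, 0 < r →
      m (ball x (2 ^ k * r)) ≤ (C : ENNReal) ^ k * m (ball x r) := by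
    intro k
    induction k with
    | zero => intro x r hr; simp
    | succ k ih =>
      intro x r hr
      have h2 : (2 : ℝ) ^ (k + 1) * r = 2 * (2 ^ k * r) := by ring
      rw [h2]
      calc m (ball x (2 * (2 ^ k * r)))
          ≤ (C : ENNReal) * m (ball x (2 ^ k * r)) := (hC x _ (by positivity)).2.1
        _ ≤ (C : ENNReal) * ((C : ENNReal) ^ k * m (ball x r)) :=
            mul_le_mul_right (ih x r hr) _
        _ = (C : ENNReal) ^ (k + 1) * m (ball x r) := by ring
  -- choose k with 3 ≤ 2^k * ε'
  obtain ⟨k, hk⟩ : ∃ k : ℕ, 3 / ε' < 2 ^ k := pow_unbounded_of_one_lt _ one_lt_two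
  have hk3 : (3 : ℝ) ≤ 2 ^ k * ε' := by
    rw [div_lt_iff₀ hε'0] at hk
    linarith
  -- the small constant
  set c : ENNReal := ((C : ENNReal) ^ k)⁻¹ with hcdef
  have hCk0 : ((C : ENNReal) ^ k) ≠ 0 := by
    simp [pow_ne_zero_iff, ENNReal.coe_ne_zero]
    exact fun h => absurd h (by exact_mod_cast hC0.ne')
  have hCktop : ((C : ENNReal) ^ k) ≠ ⊤ := by
    exact ENNReal.pow_ne_top ENNReal.coe_ne_top
  have hc0 : c ≠ 0 := by simp [hcdef, hCktop]
  have h1c : (1 : ENNReal) - c < 1 :=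
    ENNReal.sub_lt_self ENNReal.one_ne_top one_ne_zero hc0
  -- eventually the density ratio exceeds 1 - c
  have hev : {s : ℝ | 1 - c < m (E ∩ ball x₀ s) / m (ball x₀ s)} ∈ 𝓝[>] (0 : ℝ) :=
    hdens (Ioi_mem_nhds h1c)
  rw [Metric.mem_nhdsWithin_iff] at hev
  obtain ⟨r₀, hr₀, hr₀sub⟩ := hev
  refine ⟨r₀ / 2, by positivity, ?_⟩
  intro x hx hxne
  set δ : ℝ := dist x x₀ with hδdef
  have hδ0 : 0 < δ := dist_pos.mpr hxne
  have hδr : δ < r₀ / 2 := hx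
  by_contra hcon
  push_neg at hcon
  -- E misses the ball around x of radius ε' * δ
  have hmiss : E ∩ ball x (ε' * δ) = ∅ := by
    ext z
    simp only [mem_inter_iff, mem_ball, mem_empty_iff_false, iff_false, not_and]
    intro hzE hzb
    have := hcon z hzE
    have hlt : dist x z < ε * δ :=
      lt_of_lt_of_le (by rw [dist_comm]; exact hzb) (by nlinarith)
    exact absurd hlt (not_lt.mpr this)
  set s : ℝ := (1 + ε') * δ with hsdef
  have hs0 : 0 < s := by positivity
  have hsr₀ : s < r₀ := by nlinarith
  have hratio : 1 - c < m (E ∩ ball x₀ s) / m (ball x₀ s) := by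
    have : s ∈ ball (0 : ℝ) r₀ ∩ Ioi 0 := by
      constructor
      · simp [Real.ball_eq_Ioo]; constructor <;> linarith
      · exact hs0
    exact hr₀sub this
  set a : ENNReal := m (ball x (ε' * δ)) with hadef
  set b : ENNReal := m (ball x₀ s) with hbdef
  -- basic facts about b
  have hbtop : b ≠ ⊤ := (hC x₀ s hs0).2.2.ne
  have hb0 : b ≠ 0 := by
    have h := (hC x₀ (s / 2) (by positivity)).1
    rw [show 2 * (s / 2) = s by ring] at h
    exact h.ne'
  -- ball x (ε'δ) ⊆ ball x₀ s
  have hsub1 : ball x (ε' * δ) ⊆ ball x₀ s := by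
    intro z hz
    rw [mem_ball] at hz ⊢
    have := dist_triangle z x x₀
    rw [hsdef]
    nlinarith [dist_comm z x ▸ this]
  -- b ≤ C^k * a
  have hba : b ≤ (C : ENNReal) ^ k * a := by
    have hsub2 : ball x₀ s ⊆ ball x (2 ^ k * (ε' * δ)) := by
      intro z hz
      rw [mem_ball] at hz ⊢
      have ht := dist_triangle z x₀ x
      have h2k : (2 + ε') * δ ≤ 2 ^ k * (ε' * δ) := by nlinarith
      have : dist z x < (2 + ε') * δ := by
        have := dist_comm x₀ x ▸ ht
        rw [hsdef] at hz; rw [hδdef] at *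
        calc dist z x ≤ dist z x₀ + dist x₀ x := dist_triangle z x₀ x
          _ < (1 + ε') * dist x x₀ + dist x₀ x := by linarith [hz]
          _ = (2 + ε') * dist x x₀ := by rw [dist_comm x₀ x]; ring
      linarith
    calc b ≤ m (ball x (2 ^ k * (ε' * δ))) := measure_mono hsub2
      _ ≤ (C : ENNReal) ^ k * a := hiter k x (ε' * δ) (by positivity)
  -- c * b ≤ a
  have hcba : c * b ≤ a := by
    calc c * b ≤ c * ((C : ENNReal) ^ k * a) := mul_le_mul_right hba _
      _ = (c * (C : ENNReal) ^ k) * a := by ring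
      _ = a := by rw [hcdef, ENNReal.inv_mul_cancel hCk0 hCktop, one_mul]
  -- m (E ∩ B) + a ≤ b
  have hadd : m (E ∩ ball x₀ s) + a ≤ b := by
    have hdisj : Disjoint (E ∩ ball x₀ s) (ball x (ε' * δ)) := by
      rw [Set.disjoint_left]
      intro z hz1 hz2
      have : z ∈ E ∩ ball x (ε' * δ) := ⟨hz1.1, hz2⟩
      rw [hmiss] at this
      exact this
    have := measure_union hdisj measurableSet_ball (μ := m)
    calc m (E ∩ ball x₀ s) + a = m ((E ∩ ball x₀ s) ∪ ball x (ε' * δ)) := this.symm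
      _ ≤ b := measure_mono (union_subset (inter_subset_right) hsub1)
  -- conclude the ratio bound, contradiction
  have hEB : m (E ∩ ball x₀ s) ≤ (1 - c) * b := by
    have hatop : a ≠ ⊤ := (lt_of_le_of_lt (measure_mono hsub1) hbtop.lt_top).ne
    have h1 : m (E ∩ ball x₀ s) ≤ b - a := ENNReal.le_sub_of_add_le_right hatop hadd
    have h2 : b - a ≤ b - c * b := tsub_le_tsub_left hcba b
    have h3 : b - c * b = (1 - c) * b := by
      rw [ENNReal.sub_mul (fun _ _ => hbtop), one_mul]
    exact h1.trans (h2.trans_eq h3)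
  have hfinal : m (E ∩ ball x₀ s) / b ≤ 1 - c := by
    rw [ENNReal.div_le_iff hb0 hbtop]
    exact hEB
  exact absurd hfinal (not_le.mpr hratio)
end

section
/- Let (X,d,m) be a doubling metric measure space, let E ⊆ X be a Borel set and let f : X → ℝ be Lipschitz. Then for m-a.e. x ∈ E one has lip(f|_E)(x) = lip(f)(x), where lip(f|_E) denotes the local Lipschitz constant of the restriction f|_E computed in the metric subspace (E, d|_{E×E}). -/
/-!
By the Lebesgue density theorem for doubling measures, almost every point `x` of `E` is a point
where `E` is not porous: every `y` close to `x` has a point `z ∈ E` with `d(z, y) = o(d(y, x))`.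
At such a point the difference quotient of `f` at `y` is, up to the error
`Lip(f) · d(z, y) / d(y, x) → 0`, the difference quotient of `f|_E` at `z`, so the two local
Lipschitz constants agree.
-/

open MeasureTheory Metric Set Filter Topology

/-- The local Lipschitz constant `lip(f)(x)` of a real-valued function on a metric space:
the limsup of `|f y − f x| / d(y,x)` as `y → x`, `y ≠ x` (equal to `0` at isolated points,
since there the filter `𝓝[≠] x` is trivial). Valued in `ℝ≥0∞`. -/
noncomputable def locLipConst {Y : Type*} [MetricSpace Y] (f : Y → ℝ) (x : Y) : ENNReal :=
  Filter.limsup (fun y => ENNReal.ofReal (|f y - f x| / dist y x)) (𝓝[≠] x)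

open scoped NNReal ENNReal

theorem Topology.map_subtypeVal_nhdsNE {α : Type*} [TopologicalSpace α] {s : Set α} (p : s) :
    map Subtype.val (𝓝[≠] p) = 𝓝[s \ {(p : α)}] (p : α) := by
  rw [IsEmbedding.subtypeVal.map_nhdsWithin_eq, image_val_compl, image_singleton]

theorem IsUnifLocDoublingMeasure.of_measure_ball_two_mul_le {α : Type*} [PseudoMetricSpace α]
    [MeasurableSpace α] {μ : Measure α} {C : ℝ≥0}
    (h : ∀ (x : α) (r : ℝ), 0 < r → μ (ball x (2 * r)) ≤ C * μ (ball x r)) :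
    IsUnifLocDoublingMeasure μ := by
  refine ⟨⟨C * C, eventually_mem_nhdsWithin.mono fun r (hr : 0 < r) x => ?_⟩⟩
  calc μ (closedBall x (2 * r)) ≤ μ (ball x (2 * (2 * r))) :=
        measure_mono (closedBall_subset_ball (by linarith))
    _ ≤ C * (C * μ (ball x r)) := (h x _ (by positivity)).trans (by gcongr; exact h x r hr)
    _ ≤ ↑(C * C) * μ (closedBall x r) := by
        rw [ENNReal.coe_mul, mul_assoc]
        gcongr
        exact ball_subset_closedBall

section NonporousAt

variable {X : Type*} [MetricSpace X]

/-- `E` is not porous at `x`: every point `y` near `x` lies within `o(dist y x)` of `E`. -/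
def IsNonporousAt (E : Set X) (x : X) : Prop :=
  ∀ ε > 0, ∀ᶠ y in 𝓝[≠] x, ∃ z ∈ E, dist z y ≤ ε * dist y x

theorem IsUnifLocDoublingMeasure.ae_eventually_exists_mem_dist_le_mul [MeasurableSpace X]
    [SecondCountableTopology X] [BorelSpace X] (μ : Measure X) [IsLocallyFiniteMeasure μ]
    [IsUnifLocDoublingMeasure μ] (E : Set X) {ε : ℝ} (hε : 0 < ε) :
    ∀ᵐ x ∂μ.restrict E, ∀ᶠ y in 𝓝[≠] x, ∃ z ∈ E, dist z y ≤ ε * dist y x := by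
  -- Along the `y` where the conclusion fails, the balls `closedBall y (ε * dist y x)` shrink to
  -- `x`, contain it once dilated by `ε⁻¹`, and miss `E`: density `0` instead of `1`.
  filter_upwards [ae_tendsto_measure_inter_div μ E ε⁻¹] with x hx
  by_contra hporous
  set l := 𝓝[≠] x ⊓ 𝓟 {y | ¬ ∃ z ∈ E, dist z y ≤ ε * dist y x}
  have : l.NeBot := frequently_iff_neBot.1 (not_eventually.1 hporous)
  have hδ : Tendsto (fun y => ε * dist y x) l (𝓝[>] 0) := by
    refine tendsto_nhdsWithin_iff.2 ⟨?_, ?_⟩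
    · have : Tendsto (fun y => ε * dist y x) (𝓝 x) (𝓝 (ε * dist x x)) :=
        (tendsto_id.dist tendsto_const_nhds).const_mul ε
      rw [dist_self, mul_zero] at this
      exact this.mono_left (inf_le_left.trans nhdsWithin_le_nhds)
    · exact (inf_le_left : l ≤ _) (eventually_mem_nhdsWithin.mono fun y hy =>
        mul_pos hε (dist_pos.2 hy))
  have hmem : ∀ᶠ y in l, x ∈ closedBall y (ε⁻¹ * (ε * dist y x)) :=
    Eventually.of_forall fun y => by
      rw [mem_closedBall, inv_mul_cancel_left₀ hε.ne', dist_comm]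
  have hzero : ∀ᶠ y in l,
      μ (E ∩ closedBall y (ε * dist y x)) / μ (closedBall y (ε * dist y x)) = 0 := by
    refine (inf_le_right : l ≤ _) (mem_principal.2 fun y hy => ?_)
    simp only [mem_ofPred_eq]
    rw [show E ∩ closedBall y (ε * dist y x) = ∅ from
      eq_empty_of_forall_notMem fun z hz => hy ⟨z, hz⟩, measure_empty, ENNReal.zero_div]
  exact zero_ne_one <| tendsto_nhds_unique
    (tendsto_const_nhds.congr' (hzero.mono fun _ h => h.symm)) (hx id _ hδ hmem)

theorem IsUnifLocDoublingMeasure.ae_isNonporousAt [MeasurableSpace X]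
    [SecondCountableTopology X] [BorelSpace X] (μ : Measure X) [IsLocallyFiniteMeasure μ]
    [IsUnifLocDoublingMeasure μ] (E : Set X) : ∀ᵐ x ∂μ.restrict E, IsNonporousAt E x := by
  have h := ae_all_iff.2 fun n : ℕ =>
    ae_eventually_exists_mem_dist_le_mul μ E (Nat.one_div_pos_of_nat (n := n))
  filter_upwards [h] with x hx ε hε
  obtain ⟨n, hn⟩ := exists_nat_one_div_lt hε
  filter_upwards [hx n] with y ⟨z, hzE, hzy⟩
  exact ⟨z, hzE, hzy.trans (by gcongr)⟩

theorem locLipConst_subtype_eq_limsup (f : X → ℝ) {E : Set X} (p : E) :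
    locLipConst (fun y : E => f y) p =
      limsup (fun y => ENNReal.ofReal (|f y - f p| / dist y p)) (𝓝[E \ {(p : X)}] p) := by
  rw [locLipConst, ← Topology.map_subtypeVal_nhdsNE, ← limsup_comp]
  rfl

theorem locLipConst_subtype_le (f : X → ℝ) {E : Set X} (p : E) :
    locLipConst (fun y : E => f y) p ≤ locLipConst f p := by
  rw [locLipConst_subtype_eq_limsup]
  exact limsup_le_limsup_of_le (nhdsWithin_mono _ (sdiff_subset_compl _ _))

theorem locLipConst_le_ofReal {f : X → ℝ} {x : X} {c : ℝ}
    (h : ∀ᶠ y in 𝓝[≠] x, |f y - f x| ≤ c * dist y x) : locLipConst f x ≤ ENNReal.ofReal c := by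
  refine limsup_le_of_le (by isBoundedDefault) ?_
  filter_upwards [h, self_mem_nhdsWithin] with y hy hyx
  exact ENNReal.ofReal_le_ofReal ((div_le_iff₀ (dist_pos.2 hyx)).2 hy)

theorem LipschitzWith.locLipConst_le_of_isNonporousAt {f : X → ℝ} {K : ℝ≥0}
    (hf : LipschitzWith K f) {E : Set X} {x : X} (hE : IsNonporousAt E x) {b : ℝ} (hb : 0 ≤ b)
    (hfE : ∀ᶠ z in 𝓝[E \ {x}] x, |f z - f x| ≤ b * dist z x) :
    locLipConst f x ≤ ENNReal.ofReal b := by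
  obtain ⟨r, hr, hfr⟩ := nhdsWithin_basis_ball.eventually_iff.1 hfE
  have hε : ∀ ε ∈ Ioo (0 : ℝ) 1, locLipConst f x ≤ ENNReal.ofReal (b * (1 + ε) + K * ε) := by
    rintro ε ⟨hε0, hε1⟩
    refine locLipConst_le_ofReal ?_
    filter_upwards [hE ε hε0, self_mem_nhdsWithin,
      nhdsWithin_le_nhds (ball_mem_nhds x (half_pos hr))]
      with y ⟨z, hzE, hzy⟩ (hyx : y ≠ x) (hyr : dist y x < r / 2)
    have hyx_pos : 0 < dist y x := dist_pos.2 hyx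
    have hzx : dist z x ≤ (1 + ε) * dist y x := by linarith [dist_triangle z y x]
    have hzx_pos : 0 < dist z x := by nlinarith [dist_triangle y z x, dist_comm y z]
    have hz : |f z - f x| ≤ b * dist z x :=
      hfr ⟨by rw [mem_ball]; nlinarith, hzE, (dist_pos.1 hzx_pos : z ≠ x)⟩
    calc |f y - f x| ≤ |f y - f z| + |f z - f x| := abs_sub_le _ _ _
      _ ≤ K * dist y z + b * dist z x := add_le_add (hf.dist_le_mul y z) hz
      _ ≤ K * (ε * dist y x) + b * ((1 + ε) * dist y x) := by
        gcongr
        rwa [dist_comm]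
      _ = (b * (1 + ε) + K * ε) * dist y x := by ring
  have hlim : Tendsto (fun ε => ENNReal.ofReal (b * (1 + ε) + K * ε)) (𝓝[>] 0)
      (𝓝 (ENNReal.ofReal b)) := by
    have : Continuous fun ε : ℝ => ENNReal.ofReal (b * (1 + ε) + K * ε) :=
      ENNReal.continuous_ofReal.comp (by fun_prop)
    simpa using (this.tendsto 0).mono_left nhdsWithin_le_nhds
  exact ge_of_tendsto hlim (mem_of_superset (Ioo_mem_nhdsGT one_pos) hε)

theorem LipschitzWith.locLipConst_subtype_eq_of_isNonporousAt {f : X → ℝ} {K : ℝ≥0}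
    (hf : LipschitzWith K f) {E : Set X} (p : E) (hE : IsNonporousAt E p) :
    locLipConst (fun y : E => f y) p = locLipConst f p := by
  refine le_antisymm (locLipConst_subtype_le f p)
    (forall_gt_imp_ge_iff_le_of_dense.mp fun c hc => ?_)
  rcases eq_or_ne c ⊤ with rfl | hc_top
  · exact le_top
  rw [← ENNReal.ofReal_toReal hc_top] at hc ⊢
  refine hf.locLipConst_le_of_isNonporousAt hE ENNReal.toReal_nonneg ?_
  rw [locLipConst_subtype_eq_limsup] at hc
  filter_upwards [eventually_lt_of_limsup_lt hc, self_mem_nhdsWithin] with z hz hzE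
  rw [ENNReal.ofReal_lt_ofReal_iff', div_lt_iff₀ (dist_pos.2 hzE.2)] at hz
  exact hz.1.le

end NonporousAt

theorem stmt1_general {X : Type*} [MetricSpace X] [SecondCountableTopology X]
    [MeasurableSpace X] [BorelSpace X] (m : Measure X)
    (hdoub : ∃ C : NNReal, 0 < C ∧ ∀ (x : X) (r : ℝ), 0 < r →
      0 < m (ball x (2 * r)) ∧ m (ball x (2 * r)) ≤ (C : ENNReal) * m (ball x r) ∧
        m (ball x r) < ⊤)
    (E : Set X)
    (f : X → ℝ) (hf : ∃ K : NNReal, LipschitzWith K f) :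
    ∀ᵐ x ∂(m.restrict E), ∀ hx : x ∈ E,
      locLipConst (fun y : E => f y) ⟨x, hx⟩ = locLipConst f x := by
  obtain ⟨C, -, hC⟩ := hdoub
  obtain ⟨K, hK⟩ := hf
  have : IsLocallyFiniteMeasure m :=
    ⟨fun x => ⟨ball x 1, ball_mem_nhds x one_pos, (hC x 1 one_pos).2.2⟩⟩
  have : IsUnifLocDoublingMeasure m :=
    .of_measure_ball_two_mul_le fun x r hr => (hC x r hr).2.1
  filter_upwards [IsUnifLocDoublingMeasure.ae_isNonporousAt m E] with x hx hxE
  exact hK.locLipConst_subtype_eq_of_isNonporousAt ⟨x, hxE⟩ hx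

/-- If `(X,d,m)` is a doubling metric measure space, `E ⊆ X` is Borel and
`f : X → ℝ` is Lipschitz, then for `m`-a.e. `x ∈ E` the local Lipschitz constant of the
restriction `f|_E` (computed in the metric subspace `E`) coincides with `lip f x`. -/
theorem stmt1 {X : Type*} [MetricSpace X] [CompleteSpace X] [SecondCountableTopology X]
    [MeasurableSpace X] [BorelSpace X] (m : Measure X)
    (hdoub : ∃ C : NNReal, 0 < C ∧ ∀ (x : X) (r : ℝ), 0 < r →
      0 < m (ball x (2 * r)) ∧ m (ball x (2 * r)) ≤ (C : ENNReal) * m (ball x r) ∧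
        m (ball x r) < ⊤)
    (E : Set X) (hE : MeasurableSet E)
    (f : X → ℝ) (hf : ∃ K : NNReal, LipschitzWith K f) :
    ∀ᵐ x ∂(m.restrict E), ∀ hx : x ∈ E,
      locLipConst (fun y : E => f y) ⟨x, hx⟩ = locLipConst f x :=
  stmt1_general m hdoub E f hf
end

section
/- Let k ∈ ℕ and δ > 0. Then there exist ε > 0 and a Borel measurable map R : O^ε(ℝ^k) → O(ℝ^k) with finite image such that ‖T − R(T)‖ ≤ δ for every T ∈ O^ε(ℝ^k), where ‖·‖ is the operator norm. -/
open Set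

noncomputable instance (k : ℕ) :
    MeasurableSpace (EuclideanSpace ℝ (Fin k) →L[ℝ] EuclideanSpace ℝ (Fin k)) := borel _

instance (k : ℕ) :
    BorelSpace (EuclideanSpace ℝ (Fin k) →L[ℝ] EuclideanSpace ℝ (Fin k)) := ⟨rfl⟩

/-- `O^ε(ℝ^k)`: the set of linear, invertible maps `T : ℝ^k → ℝ^k`
with `‖T‖ ≤ 1+ε` and `‖T⁻¹‖ ≤ 1+ε` (operator norms). -/
def OEps (k : ℕ) (ε : ℝ) :
    Set (EuclideanSpace ℝ (Fin k) →L[ℝ] EuclideanSpace ℝ (Fin k)) :=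
  {T | ∃ S, T.comp S = ContinuousLinearMap.id ℝ _ ∧ S.comp T = ContinuousLinearMap.id ℝ _ ∧
    ‖T‖ ≤ 1 + ε ∧ ‖S‖ ≤ 1 + ε}

/-- `O(ℝ^k)`: the group of linear isometries of `ℝ^k`. -/
def OGrp (k : ℕ) :
    Set (EuclideanSpace ℝ (Fin k) →L[ℝ] EuclideanSpace ℝ (Fin k)) :=
  {T | (∀ v, ‖T v‖ = ‖v‖) ∧ Function.Surjective T}

/-! ### Auxiliary: selection from a finite list -/

open Classical in
/-- Pick the first element of `l` within distance `δ` of `T`, defaulting to `d`. -/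
noncomputable def pick {X : Type*} [NormedAddCommGroup X] (δ : ℝ) (d : X) : List X → X → X
  | [], _ => d
  | Q :: l, T => if ‖T - Q‖ ≤ δ then Q else pick δ d l T

section PickLemmas

variable {X : Type*} [NormedAddCommGroup X]

lemma pick_measurable [MeasurableSpace X] [BorelSpace X] (δ : ℝ) (d : X) (l : List X) :
    Measurable (fun T => pick δ d l T) := by
  induction l with
  | nil => exact measurable_const
  | cons Q l ih =>
      simp only [pick]
      exact Measurable.ite
        (isClosed_le (by continuity) continuous_const).measurableSet measurable_const ih

lemma pick_mem (δ : ℝ) (d : X) (l : List X) (T : X) : pick δ d l T = d ∨ pick δ d l T ∈ l := by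
  induction l with
  | nil => left; rfl
  | cons Q l ih =>
      simp only [pick]
      split
      · right; simp
      · rcases ih with h | h
        · left; exact h
        · right; simp [h]

lemma pick_spec (δ : ℝ) (d : X) (l : List X) (T : X)
    (h : ∃ Q ∈ l, ‖T - Q‖ ≤ δ) : ‖T - pick δ d l T‖ ≤ δ := by
  induction l with
  | nil => simp at h
  | cons Q l ih =>
      by_cases hc : ‖T - Q‖ ≤ δ
      · simp [pick, hc]
      · rw [pick, if_neg hc]
        refine ih ?_
        rcases h with ⟨Q', hQ', hle⟩
        rcases List.mem_cons.1 hQ' with rfl | hm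
        · exact absurd hle hc
        · exact ⟨Q', hm, hle⟩

end PickLemmas

/-! ### Structure of `OGrp` -/

lemma ogrp_eq (k : ℕ) :
    OGrp k = {T : EuclideanSpace ℝ (Fin k) →L[ℝ] EuclideanSpace ℝ (Fin k) |
      ∀ v, ‖T v‖ = ‖v‖} := by
  ext T
  constructor
  · exact fun h => h.1
  · intro h
    refine ⟨h, ?_⟩
    have hinj : Function.Injective T := by
      intro x y hxy
      have : ‖T (x - y)‖ = 0 := by simp [hxy]
      rw [h] at this
      simpa [sub_eq_zero] using norm_eq_zero.mp this
    have := (LinearMap.injective_iff_surjective (f := (T : EuclideanSpace ℝ (Fin k) →ₗ[ℝ]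
      EuclideanSpace ℝ (Fin k)))).mp hinj
    exact this

lemma ogrp_compact (k : ℕ) : IsCompact (OGrp k) := by
  rw [ogrp_eq]
  have hclosed : IsClosed {T : EuclideanSpace ℝ (Fin k) →L[ℝ] EuclideanSpace ℝ (Fin k) |
      ∀ v, ‖T v‖ = ‖v‖} := by
    have : {T : EuclideanSpace ℝ (Fin k) →L[ℝ] EuclideanSpace ℝ (Fin k) | ∀ v, ‖T v‖ = ‖v‖} =
        ⋂ v, {T | ‖T v‖ = ‖v‖} := by ext T; simp
    rw [this]
    refine isClosed_iInter fun v => isClosed_eq ?_ continuous_const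
    exact (continuous_norm.comp (ContinuousLinearMap.apply ℝ _ v).continuous)
  have hbdd : Bornology.IsBounded {T : EuclideanSpace ℝ (Fin k) →L[ℝ]
      EuclideanSpace ℝ (Fin k) | ∀ v, ‖T v‖ = ‖v‖} := by
    refine (Metric.isBounded_iff_subset_closedBall 0).2 ⟨1, fun T hT => ?_⟩
    simp only [Metric.mem_closedBall, dist_zero_right]
    exact ContinuousLinearMap.opNorm_le_bound _ zero_le_one (fun v => by rw [hT v, one_mul])
  exact Metric.isCompact_of_isClosed_isBounded hclosed hbdd

/-! ### Every map in `O^ε` is close to an isometry, for small `ε` -/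

set_option maxHeartbeats 1000000 in
lemma stepA (k : ℕ) (δ : ℝ) (hδ : 0 < δ) :
    ∃ ε > (0 : ℝ), ∀ T ∈ OEps k ε, ∃ Q ∈ OGrp k, ‖T - Q‖ ≤ δ := by
  by_contra hcon
  push_neg at hcon
  have hsel : ∀ n : ℕ, ∃ T ∈ OEps k (1 / (n + 1 : ℝ)),
      ∀ Q ∈ OGrp k, δ < ‖T - Q‖ := by
    intro n
    have hpos : (0:ℝ) < 1 / (n + 1 : ℝ) := by positivity
    exact hcon _ hpos
  choose T hT hbad using hsel
  choose S hTS hST hTn hSn using hT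
  have hTb : ∀ n, T n ∈ Metric.closedBall 0 2 := by
    intro n
    simp only [Metric.mem_closedBall, dist_zero_right]
    refine (hTn n).trans ?_
    have : 1 / (n + 1 : ℝ) ≤ 1 := by
      rw [div_le_one (by positivity)]; linarith [Nat.cast_nonneg (α := ℝ) n]
    linarith
  have hSb : ∀ n, S n ∈ Metric.closedBall 0 2 := by
    intro n
    simp only [Metric.mem_closedBall, dist_zero_right]
    refine (hSn n).trans ?_
    have : 1 / (n + 1 : ℝ) ≤ 1 := by
      rw [div_le_one (by positivity)]; linarith [Nat.cast_nonneg (α := ℝ) n]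
    linarith
  -- subsequences
  obtain ⟨Ti, _, φ₀, hφ₀, hconvT₀⟩ := (isCompact_closedBall (0 : EuclideanSpace ℝ (Fin k) →L[ℝ]
    EuclideanSpace ℝ (Fin k)) 2).tendsto_subseq hTb
  obtain ⟨Si, _, ψ, hψ, hconvS₀⟩ := (isCompact_closedBall (0 : EuclideanSpace ℝ (Fin k) →L[ℝ]
    EuclideanSpace ℝ (Fin k)) 2).tendsto_subseq (fun n => hSb (φ₀ n))
  set φ : ℕ → ℕ := φ₀ ∘ ψ with hφdef
  have hφ : StrictMono φ := hφ₀.comp hψ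
  have hconvT : Filter.Tendsto (fun n => T (φ n)) Filter.atTop (nhds Ti) := by
    have := hconvT₀.comp hψ.tendsto_atTop
    exact this
  have hconvS : Filter.Tendsto (fun n => S (φ n)) Filter.atTop (nhds Si) := hconvS₀
  have hconv : Filter.Tendsto (fun n => (T (φ n), S (φ n))) Filter.atTop (nhds (Ti, Si)) :=
    hconvT.prodMk_nhds hconvS
  -- compositions
  have hcomp : Continuous fun p : (EuclideanSpace ℝ (Fin k) →L[ℝ] EuclideanSpace ℝ (Fin k)) ×
      (EuclideanSpace ℝ (Fin k) →L[ℝ] EuclideanSpace ℝ (Fin k)) => p.1.comp p.2 :=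
    (isBoundedBilinearMap_comp (𝕜 := ℝ)).continuous
  have hTSi : Ti.comp Si = ContinuousLinearMap.id ℝ _ := by
    have h1 : Filter.Tendsto (fun n => (T (φ n)).comp (S (φ n))) Filter.atTop
        (nhds (Ti.comp Si)) := (hcomp.tendsto _).comp hconv
    have h2 : (fun n => (T (φ n)).comp (S (φ n))) =
        fun _ => ContinuousLinearMap.id ℝ _ := funext fun n => hTS _
    rw [h2] at h1
    exact (tendsto_const_nhds_iff.mp h1).symm
  have hSTi : Si.comp Ti = ContinuousLinearMap.id ℝ _ := by
    have hswap : Continuous fun p : (EuclideanSpace ℝ (Fin k) →L[ℝ] EuclideanSpace ℝ (Fin k)) ×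
        (EuclideanSpace ℝ (Fin k) →L[ℝ] EuclideanSpace ℝ (Fin k)) => p.2.comp p.1 :=
      hcomp.comp continuous_swap
    have h1 : Filter.Tendsto (fun n => (S (φ n)).comp (T (φ n))) Filter.atTop
        (nhds (Si.comp Ti)) := (hswap.tendsto _).comp hconv
    have h2 : (fun n => (S (φ n)).comp (T (φ n))) =
        fun _ => ContinuousLinearMap.id ℝ _ := funext fun n => hST _
    rw [h2] at h1
    exact (tendsto_const_nhds_iff.mp h1).symm
  -- norm bounds
  have hφtop : Filter.Tendsto φ Filter.atTop Filter.atTop := hφ.tendsto_atTop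
  have hbound : Filter.Tendsto (fun n : ℕ => 1 + 1 / ((φ n : ℝ) + 1)) Filter.atTop
      (nhds 1) := by
    have : Filter.Tendsto (fun n : ℕ => 1 / ((n : ℝ) + 1)) Filter.atTop (nhds 0) :=
      tendsto_one_div_add_atTop_nhds_zero_nat
    have h2 := this.comp hφtop
    simpa using Filter.Tendsto.const_add 1 h2
  have hTnorm : ‖Ti‖ ≤ 1 :=
    le_of_tendsto_of_tendsto' (hconvT.norm) hbound fun n => hTn (φ n)
  have hSnorm : ‖Si‖ ≤ 1 :=
    le_of_tendsto_of_tendsto' (hconvS.norm) hbound fun n => hSn (φ n)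
  -- `Ti` is an isometry
  have hiso : ∀ v, ‖Ti v‖ = ‖v‖ := by
    intro v
    refine le_antisymm ?_ ?_
    · calc ‖Ti v‖ ≤ ‖Ti‖ * ‖v‖ := Ti.le_opNorm v
        _ ≤ 1 * ‖v‖ := by gcongr
        _ = ‖v‖ := one_mul _
    · have hv : v = Si (Ti v) := by
        have := congrArg (fun f : EuclideanSpace ℝ (Fin k) →L[ℝ] EuclideanSpace ℝ (Fin k) =>
          f v) hSTi
        simpa using this.symm
      calc ‖v‖ = ‖Si (Ti v)‖ := by rw [← hv]
        _ ≤ ‖Si‖ * ‖Ti v‖ := Si.le_opNorm _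
        _ ≤ 1 * ‖Ti v‖ := by gcongr
        _ = ‖Ti v‖ := one_mul _
  have hTi : Ti ∈ OGrp k := by rw [ogrp_eq]; exact hiso
  -- contradiction
  have hfar : ∀ n, δ < ‖T (φ n) - Ti‖ := fun n => hbad (φ n) Ti hTi
  have hzero : Filter.Tendsto (fun n => ‖T (φ n) - Ti‖) Filter.atTop (nhds 0) := by
    have h1 : Filter.Tendsto (fun n => T (φ n) - Ti) Filter.atTop (nhds (Ti - Ti)) :=
      hconvT.sub tendsto_const_nhds
    rw [sub_self] at h1
    have h2 := h1.norm
    rwa [norm_zero] at h2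
  have : δ ≤ 0 := le_of_tendsto_of_tendsto' tendsto_const_nhds hzero fun n => (hfar n).le
  linarith

/-- For every `k` and `δ > 0` there exist `ε > 0` and a Borel map
`R : O^ε(ℝ^k) → O(ℝ^k)` with finite image such that `‖T − R(T)‖ ≤ δ` for all `T ∈ O^ε(ℝ^k)`. -/
theorem stmt3 (k : ℕ) (δ : ℝ) (hδ : 0 < δ) :
    ∃ ε > (0 : ℝ), ∃ R : OEps k ε → (EuclideanSpace ℝ (Fin k) →L[ℝ] EuclideanSpace ℝ (Fin k)),
      Measurable R ∧ (Set.range R).Finite ∧ (∀ T, R T ∈ OGrp k) ∧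
      ∀ T : OEps k ε, ‖(T : EuclideanSpace ℝ (Fin k) →L[ℝ] EuclideanSpace ℝ (Fin k)) - R T‖ ≤ δ := by
  obtain ⟨ε, hε, hnear⟩ := stepA k (δ / 2) (by linarith)
  -- finite δ/2-net of OGrp from compactness
  obtain ⟨b, hbsub, hbfin, hbcov⟩ := (ogrp_compact k).elim_finite_subcover_image
    (ι := EuclideanSpace ℝ (Fin k) →L[ℝ] EuclideanSpace ℝ (Fin k))
    (b := OGrp k) (c := fun Q => Metric.ball Q (δ / 2))
    (fun Q _ => Metric.isOpen_ball)
    (fun Q hQ => Set.mem_biUnion hQ (Metric.mem_ball_self (by linarith)))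
  set l : List (EuclideanSpace ℝ (Fin k) →L[ℝ] EuclideanSpace ℝ (Fin k)) :=
    hbfin.toFinset.toList with hl
  have hmeml : ∀ Q, Q ∈ l ↔ Q ∈ b := by
    intro Q; rw [hl, Finset.mem_toList, Set.Finite.mem_toFinset]
  have hid : ContinuousLinearMap.id ℝ (EuclideanSpace ℝ (Fin k)) ∈ OGrp k :=
    ⟨fun v => rfl, fun v => ⟨v, rfl⟩⟩
  refine ⟨ε, hε, fun T => pick δ (ContinuousLinearMap.id ℝ _) l (T : _), ?_, ?_, ?_, ?_⟩
  · exact (pick_measurable δ _ l).comp measurable_subtype_coe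
  · refine Set.Finite.subset ((hbfin.insert (ContinuousLinearMap.id ℝ _))) ?_
    rintro x ⟨T, rfl⟩
    rcases pick_mem δ (ContinuousLinearMap.id ℝ _) l (T : _) with h | h
    · show pick δ _ l (T : _) ∈ _
      rw [h]; exact Set.mem_insert _ _
    · exact Set.mem_insert_of_mem _ ((hmeml _).mp h)
  · intro T
    rcases pick_mem δ (ContinuousLinearMap.id ℝ _) l (T : _) with h | h
    · show pick δ _ l (T : _) ∈ _
      rw [h]; exact hid
    · exact hbsub ((hmeml _).mp h)
  · intro T
    refine pick_spec δ _ l _ ?_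
    obtain ⟨Q, hQ, hQnear⟩ := hnear (T : _) T.2
    obtain ⟨Q', hQ'b, hQ'ball⟩ := Set.mem_iUnion₂.mp (hbcov hQ)
    refine ⟨Q', (hmeml Q').mpr hQ'b, ?_⟩
    have h1 : ‖Q - Q'‖ < δ / 2 := by
      have := Metric.mem_ball.mp hQ'ball
      rwa [dist_eq_norm] at this
    calc ‖(T : EuclideanSpace ℝ (Fin k) →L[ℝ] EuclideanSpace ℝ (Fin k)) - Q'‖
        = ‖((T : EuclideanSpace ℝ (Fin k) →L[ℝ] EuclideanSpace ℝ (Fin k)) - Q) + (Q - Q')‖ := by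
          rw [sub_add_sub_cancel]
      _ ≤ ‖(T : EuclideanSpace ℝ (Fin k) →L[ℝ] EuclideanSpace ℝ (Fin k)) - Q‖ + ‖Q - Q'‖ :=
          norm_add_le _ _
      _ ≤ δ / 2 + δ / 2 := by
          have := h1.le
          gcongr
      _ = δ := by ring
end

section
/- Let E ⊆ ℝ^k be a Borel set and f : E → ℝ^k a Lipschitz map. If f̃₁ and f̃₂ are two Lipschitz maps from ℝ^k to ℝ^k that both coincide with f on E, then their differentials agree almost everywhere on E: for L^k-a.e. x ∈ E, both f̃₁ and f̃₂ are differentiable at x and Df̃₁(x) = Df̃₂(x). -/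
open MeasureTheory Set

section

variable {E : Type*} [NormedAddCommGroup E] [NormedSpace ℝ E] [FiniteDimensional ℝ E]
  [MeasurableSpace E] [BorelSpace E] (μ : Measure E) [μ.IsAddHaarMeasure] {s : Set E}

/-- At Lebesgue density points of `s` the derivative of a map vanishing on `s` is seen by `s`
alone; this is `ApproximatesLinearOn.norm_fderiv_sub_le` with `A = 0` and precision `0`. -/
theorem ae_restrict_fderiv_eq_zero_of_eqOn_zero {h : E → E} (hs : MeasurableSet s)
    (h0 : EqOn h 0 s) : ∀ᵐ x ∂μ.restrict s, DifferentiableAt ℝ h x → fderiv ℝ h x = 0 := by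
  set t := s ∩ {x | DifferentiableAt ℝ h x}
  have ht : MeasurableSet t := hs.inter (measurableSet_of_differentiableAt ℝ h)
  have happrox : ApproximatesLinearOn h (0 : E →L[ℝ] E) t 0 := fun x hx y hy => by
    simp [h0 hx.1, h0 hy.1]
  have hzero : ∀ᵐ x ∂μ.restrict t, ‖fderiv ℝ h x - 0‖₊ ≤ 0 :=
    happrox.norm_fderiv_sub_le μ ht _ fun x hx => hx.2.hasFDerivAt.hasFDerivWithinAt
  rw [ae_restrict_iff' ht] at hzero
  filter_upwards [ae_restrict_mem hs, ae_restrict_of_ae hzero] with x hxs hx hxd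
  simpa using hx ⟨hxs, hxd⟩

theorem ae_restrict_fderiv_eq_of_eqOn {g₁ g₂ : E → E} (hs : MeasurableSet s)
    (heq : EqOn g₁ g₂ s) :
    ∀ᵐ x ∂μ.restrict s, DifferentiableAt ℝ g₁ x → DifferentiableAt ℝ g₂ x →
      fderiv ℝ g₁ x = fderiv ℝ g₂ x := by
  have hsub : EqOn (fun x => g₁ x - g₂ x) 0 s := fun x hx => sub_eq_zero.2 (heq hx)
  filter_upwards [ae_restrict_fderiv_eq_zero_of_eqOn_zero μ hs hsub] with x hx hx₁ hx₂
  rw [← sub_eq_zero, ← fderiv_fun_sub hx₁ hx₂]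
  exact hx (hx₁.sub hx₂)

end

theorem stmt5_general (k : ℕ) (E : Set (EuclideanSpace ℝ (Fin k))) (hE : MeasurableSet E)
    (f : E → EuclideanSpace ℝ (Fin k))
    (g₁ g₂ : EuclideanSpace ℝ (Fin k) → EuclideanSpace ℝ (Fin k))
    (hg₁ : ∃ K : NNReal, LipschitzWith K g₁) (hg₂ : ∃ K : NNReal, LipschitzWith K g₂)
    (hg₁f : ∀ x : E, g₁ x = f x) (hg₂f : ∀ x : E, g₂ x = f x) :
    ∀ᵐ x ∂(volume.restrict E),
      DifferentiableAt ℝ g₁ x ∧ DifferentiableAt ℝ g₂ x ∧ fderiv ℝ g₁ x = fderiv ℝ g₂ x := by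
  obtain ⟨K₁, hK₁⟩ := hg₁
  obtain ⟨K₂, hK₂⟩ := hg₂
  have heq : EqOn g₁ g₂ E := fun x hx => (hg₁f ⟨x, hx⟩).trans (hg₂f ⟨x, hx⟩).symm
  filter_upwards [ae_restrict_of_ae hK₁.ae_differentiableAt,
    ae_restrict_of_ae hK₂.ae_differentiableAt,
    ae_restrict_fderiv_eq_of_eqOn volume hE heq] with x hx₁ hx₂ hderiv
  exact ⟨hx₁, hx₂, hderiv hx₁ hx₂⟩

/-- Let `E ⊆ ℝ^k` be Borel and `f : E → ℝ^k` Lipschitz. If `g₁, g₂` are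
Lipschitz maps `ℝ^k → ℝ^k` both coinciding with `f` on `E`, then for `L^k`-a.e. `x ∈ E`
both are differentiable at `x` with the same differential. -/
theorem stmt5 (k : ℕ) (E : Set (EuclideanSpace ℝ (Fin k))) (hE : MeasurableSet E)
    (f : E → EuclideanSpace ℝ (Fin k)) (hf : ∃ K : NNReal, LipschitzWith K f)
    (g₁ g₂ : EuclideanSpace ℝ (Fin k) → EuclideanSpace ℝ (Fin k))
    (hg₁ : ∃ K : NNReal, LipschitzWith K g₁) (hg₂ : ∃ K : NNReal, LipschitzWith K g₂)
    (hg₁f : ∀ x : E, g₁ x = f x) (hg₂f : ∀ x : E, g₂ x = f x) :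
    ∀ᵐ x ∂(volume.restrict E),
      DifferentiableAt ℝ g₁ x ∧ DifferentiableAt ℝ g₂ x ∧ fderiv ℝ g₁ x = fderiv ℝ g₂ x :=
  stmt5_general k E hE f g₁ g₂ hg₁ hg₂ hg₁f hg₂f
end

section
/- Let (X,d) be a complete separable metric space, m a nonnegative Borel measure on X, U ⊆ X a Borel set, k ∈ ℕ, and φ : U → ℝ^k a map that is biLipschitz onto its image and satisfies C^{-1}·L^k|_{φ(U)} ≤ φ_*(m|_U) ≤ C·L^k|_{φ(U)} for some constant C ≥ 1. Let (r_j)_{j∈ℕ} be a sequence of positive reals with r_j ↓ 0 and define W := { (x̄, (φ(x)−φ(x̄))/r_j) : x̄, x ∈ U, j ∈ ℕ } ⊆ X × ℝ^k. Then W is Borel and (m|_U ⊗ L^k)( (U × ℝ^k) \ W ) = 0. -/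
/-!
The set `W` is a countable union of images of the Borel set `U × U` under maps that are
continuous and injective on it, hence Borel by Lusin–Souslin. For `x̄ ∈ U`, a vector `v` lies
outside the slice of `W` over `x̄` exactly when `φ x̄ + r_j v ∉ φ(U)` for every `j`. If `φ x̄` is a
Lebesgue density point of `φ(U)`, rescaling balls around `φ x̄` by `r_j → 0` shows that the set of
such `v` is Lebesgue-null. By the density theorem almost every point of `φ(U)` is a density point,
and the bound `φ_*(m|_U) ≤ C·L^k|_{φ(U)}` transfers this to `m`-almost every `x̄ ∈ U`; Fubini
concludes.
-/

open MeasureTheory Metric Set Filter Topology Pointwise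

section Density

variable {E : Type*} [NormedAddCommGroup E] [NormedSpace ℝ E] [MeasurableSpace E] [BorelSpace E]
  [FiniteDimensional ℝ E] (μ : Measure E) [μ.IsAddHaarMeasure]

theorem addHaar_singleton_add_smul (y : E) {ρ : ℝ} (t : Set E) :
    μ ({y} + ρ • t) = ENNReal.ofReal |ρ ^ Module.finrank ℝ E| * μ t := by
  rw [← vadd_eq_add, singleton_vadd, measure_vadd, Measure.addHaar_smul]

theorem addHaar_inter_singleton_add_smul_div (s t : Set E) (y : E) {ρ : ℝ} (hρ : ρ ≠ 0) :
    μ (s ∩ ({y} + ρ • t)) / μ ({y} + ρ • t) = μ (t ∩ (fun v => y + ρ • v) ⁻¹' s) / μ t := by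
  have himage : s ∩ ({y} + ρ • t) = {y} + ρ • (t ∩ (fun v => y + ρ • v) ⁻¹' s) := by
    rw [singleton_add, singleton_add, ← image_smul, ← image_smul, image_image, image_image,
      image_inter_preimage, inter_comm]
  rw [himage, addHaar_singleton_add_smul, addHaar_singleton_add_smul,
    ENNReal.mul_div_mul_left _ _ (by simp [hρ]) ENNReal.ofReal_ne_top]

theorem tendsto_addHaar_inter_preimage_add_smul_of_density_zero (s : Set E) (y : E)
    (hs : Tendsto (fun ρ => μ (s ∩ closedBall y ρ) / μ (closedBall y ρ)) (𝓝[>] 0) (𝓝 0))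
    {t : Set E} (ht : MeasurableSet t) (ht_top : μ t ≠ ⊤) :
    Tendsto (fun ρ : ℝ => μ (t ∩ (fun v => y + ρ • v) ⁻¹' s)) (𝓝[>] 0) (𝓝 0) := by
  rcases eq_or_ne (μ t) 0 with ht_zero | ht_zero
  · simp [measure_mono_null inter_subset_left ht_zero]
  have hratio : Tendsto (fun ρ : ℝ => μ (t ∩ (fun v => y + ρ • v) ⁻¹' s) / μ t) (𝓝[>] 0) (𝓝 0) := by
    refine Tendsto.congr' ?_ (μ.tendsto_addHaar_inter_smul_zero_of_density_zero s y hs t ht ht_top)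
    filter_upwards [self_mem_nhdsWithin] with ρ (hρ : 0 < ρ)
    exact addHaar_inter_singleton_add_smul_div μ s t y hρ.ne'
  simpa [ENNReal.div_mul_cancel ht_zero ht_top] using
    ENNReal.Tendsto.mul_const hratio (Or.inr ht_top)

theorem addHaar_setOf_forall_add_smul_mem_eq_zero (s : Set E) (y : E)
    (hs : Tendsto (fun ρ => μ (s ∩ closedBall y ρ) / μ (closedBall y ρ)) (𝓝[>] 0) (𝓝 0))
    {r : ℕ → ℝ} (hr : Tendsto r atTop (𝓝[>] 0)) :
    μ {v | ∀ j, y + r j • v ∈ s} = 0 := by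
  refine measure_null_of_locally_null _ fun v _ =>
    ⟨_, inter_mem_nhdsWithin _ (ball_mem_nhds v one_pos), ?_⟩
  have hlim := (tendsto_addHaar_inter_preimage_add_smul_of_density_zero μ s y hs
    (measurableSet_ball (x := v) (ε := 1)) measure_ball_lt_top.ne).comp hr
  refine le_antisymm (ge_of_tendsto' hlim fun j => measure_mono ?_) zero_le
  rintro w ⟨hw, hw_ball⟩
  exact ⟨hw_ball, hw j⟩

theorem ae_restrict_tendsto_measure_compl_inter_div {A : Set E} (hA : MeasurableSet A) :
    ∀ᵐ y ∂μ.restrict A,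
      Tendsto (fun ρ => μ (Aᶜ ∩ closedBall y ρ) / μ (closedBall y ρ)) (𝓝[>] 0) (𝓝 0) := by
  filter_upwards [ae_restrict_of_ae (Besicovitch.ae_tendsto_measure_inter_div_of_measurableSet
    μ hA.compl), ae_restrict_mem hA] with y hy hyA
  simpa [hyA] using hy

end Density

theorem injOn_prodMk_smul_sub {X F : Type*} [AddCommGroup F] [Module ℝ F] {φ : X → F}
    {U : Set X} (hφ : InjOn φ U) {c : ℝ} (hc : c ≠ 0) :
    InjOn (fun p : X × X => (p.1, c • (φ p.2 - φ p.1))) (U ×ˢ U) := by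
  rintro ⟨x₁, x₂⟩ ⟨-, hx₂⟩ ⟨y₁, y₂⟩ ⟨-, hy₂⟩ h
  simp only [Prod.mk.injEq] at h
  obtain ⟨rfl, h⟩ := h
  exact congrArg (Prod.mk x₁) (hφ hx₂ hy₂ (sub_left_inj.mp (smul_right_injective F hc h)))

theorem measurableSet_image_prodMk_smul_sub {X F : Type*} [TopologicalSpace X] [PolishSpace X]
    [MeasurableSpace X] [BorelSpace X] [NormedAddCommGroup F] [NormedSpace ℝ F]
    [SecondCountableTopology F] [MeasurableSpace F] [BorelSpace F] {φ : X → F} {U : Set X}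
    (hU : MeasurableSet U) (hφc : ContinuousOn φ U) (hφi : InjOn φ U) {c : ℝ} (hc : c ≠ 0) :
    MeasurableSet ((fun p : X × X => (p.1, c • (φ p.2 - φ p.1))) '' (U ×ˢ U)) := by
  refine (hU.prod hU).image_of_continuousOn_injOn ?_ (injOn_prodMk_smul_sub hφi hc)
  exact continuousOn_fst.prodMk (((hφc.comp continuousOn_snd fun p hp => hp.2).sub
    (hφc.comp continuousOn_fst fun p hp => hp.1)).const_smul c)

theorem ae_restrict_comp_of_measure_preimage_le_mul {X Y : Type*} [MeasurableSpace X]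
    [MeasurableSpace Y] {m : Measure X} {ν : Measure Y} {U : Set X} (hU : MeasurableSet U)
    {φ : X → Y} (hφ : AEMeasurable φ (m.restrict U))
    {C : ENNReal} (hle : ∀ B, MeasurableSet B → m (U ∩ φ ⁻¹' B) ≤ C * ν (B ∩ φ '' U))
    {P : Y → Prop} (hP : ∀ᵐ y ∂ν.restrict (φ '' U), P y) :
    ∀ᵐ x ∂m.restrict U, P (φ x) := by
  refine ae_of_ae_map hφ (Measure.AbsolutelyContinuous.mk (fun B hB hνB => ?_) |>.ae_le hP)
  rw [Measure.restrict_apply hB] at hνB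
  rw [Measure.map_apply_of_aemeasurable hφ hB, Measure.restrict_apply' hU, inter_comm]
  exact le_antisymm ((hle B hB).trans (by simp [hνB])) zero_le

theorem stmt8_general {X : Type*} [MetricSpace X] [CompleteSpace X] [SecondCountableTopology X]
    [MeasurableSpace X] [BorelSpace X] (m : Measure X)
    (k : ℕ) (U : Set X) (hU : MeasurableSet U)
    (φ : X → EuclideanSpace ℝ (Fin k))
    (hbiLip : ∃ K : NNReal, 0 < K ∧ ∀ x ∈ U, ∀ y ∈ U,
      dist x y ≤ K * dist (φ x) (φ y) ∧ dist (φ x) (φ y) ≤ K * dist x y)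
    (C : NNReal)
    (hmeascomp : ∀ B : Set (EuclideanSpace ℝ (Fin k)), MeasurableSet B →
      volume (B ∩ φ '' U) ≤ (C : ENNReal) * m (U ∩ φ ⁻¹' B) ∧
      m (U ∩ φ ⁻¹' B) ≤ (C : ENNReal) * volume (B ∩ φ '' U))
    (r : ℕ → ℝ) (hrpos : ∀ j, 0 < r j)
    (hrlim : Filter.Tendsto r Filter.atTop (nhds 0)) :
    MeasurableSet (⋃ j : ℕ,
        (fun p : X × X => ((p.1 : X), (r j)⁻¹ • (φ p.2 - φ p.1))) '' (U ×ˢ U)) ∧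
      ((m.restrict U).prod volume)
        ((U ×ˢ (Set.univ : Set (EuclideanSpace ℝ (Fin k)))) \
          ⋃ j : ℕ, (fun p : X × X => ((p.1 : X), (r j)⁻¹ • (φ p.2 - φ p.1))) '' (U ×ˢ U)) = 0 := by
  obtain ⟨K, -, hK⟩ := hbiLip
  have hφc : ContinuousOn φ U :=
    (LipschitzOnWith.of_dist_le_mul fun x hx y hy => (hK x hx y hy).2).continuousOn
  have hφi : InjOn φ U := fun x hx y hy h =>
    dist_le_zero.1 (by simpa [h] using (hK x hx y hy).1)
  have hW := MeasurableSet.iUnion fun j =>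
    measurableSet_image_prodMk_smul_sub hU hφc hφi (inv_ne_zero (hrpos j).ne')
  refine ⟨hW, (Measure.measure_prod_null ((hU.prod .univ).diff hW)).2 ?_⟩
  have hdens := ae_restrict_tendsto_measure_compl_inter_div volume
    (hU.image_of_continuousOn_injOn hφc hφi)
  filter_upwards [ae_restrict_mem hU, ae_restrict_comp_of_measure_preimage_le_mul hU
    (hφc.aemeasurable hU) (fun B hB => (hmeascomp B hB).2) hdens] with x hx hx_dens
  refine measure_mono_null ?_ (addHaar_setOf_forall_add_smul_mem_eq_zero volume _ _ hx_dens
    (tendsto_nhdsWithin_of_tendsto_nhds_of_eventually_within _ hrlim (.of_forall hrpos)))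
  rintro v ⟨-, hv⟩ j ⟨x', hx', hx'v⟩
  refine hv (mem_iUnion.2 ⟨j, (x, x'), ⟨hx, hx'⟩, ?_⟩)
  simp [hx'v, (hrpos j).ne']

/-- Let `(X,d)` be complete separable, `m` a Borel measure, `U ⊆ X` Borel and
`φ : U → ℝ^k` (here a map `X → ℝ^k` whose relevant properties concern only `U`) biLipschitz onto
its image with `C⁻¹·L^k|_{φ(U)} ≤ φ_*(m|_U) ≤ C·L^k|_{φ(U)}`. For `r_j ↓ 0` let
`W := {(x̄, (φ(x)−φ(x̄))/r_j) : x̄,x ∈ U, j ∈ ℕ}`. Then `W` is Borel and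
`(m|_U ⊗ L^k)((U × ℝ^k) \ W) = 0`. -/
theorem stmt8 {X : Type*} [MetricSpace X] [CompleteSpace X] [SecondCountableTopology X]
    [MeasurableSpace X] [BorelSpace X] (m : Measure X)
    (k : ℕ) (U : Set X) (hU : MeasurableSet U)
    (φ : X → EuclideanSpace ℝ (Fin k))
    (hbiLip : ∃ K : NNReal, 0 < K ∧ ∀ x ∈ U, ∀ y ∈ U,
      dist x y ≤ K * dist (φ x) (φ y) ∧ dist (φ x) (φ y) ≤ K * dist x y)
    (C : NNReal) (hC : 1 ≤ C)
    (hmeascomp : ∀ B : Set (EuclideanSpace ℝ (Fin k)), MeasurableSet B →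
      volume (B ∩ φ '' U) ≤ (C : ENNReal) * m (U ∩ φ ⁻¹' B) ∧
      m (U ∩ φ ⁻¹' B) ≤ (C : ENNReal) * volume (B ∩ φ '' U))
    (r : ℕ → ℝ) (hrpos : ∀ j, 0 < r j) (hranti : Antitone r)
    (hrlim : Filter.Tendsto r Filter.atTop (nhds 0)) :
    MeasurableSet (⋃ j : ℕ,
        (fun p : X × X => ((p.1 : X), (r j)⁻¹ • (φ p.2 - φ p.1))) '' (U ×ˢ U)) ∧
      ((m.restrict U).prod volume)
        ((U ×ˢ (Set.univ : Set (EuclideanSpace ℝ (Fin k)))) \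
          ⋃ j : ℕ, (fun p : X × X => ((p.1 : X), (r j)⁻¹ • (φ p.2 - φ p.1))) '' (U ×ˢ U)) = 0 :=
  stmt8_general m k U hU φ hbiLip C hmeascomp r hrpos hrlim
end

section
/- Let (X,d) be a separable metric space and U ⊆ X a nonempty closed set. Then there exists a Borel measurable map P : X → X with P(x) ∈ U for every x ∈ X, P(x) = x for every x ∈ U, and d(x, P(x)) ≤ 2·dist(x, U) for every x ∈ X, where dist(x,U) := inf_{u∈U} d(x,u). -/
open MeasureTheory Metric Set

/-- On a separable metric space, every nonempty closed set `U` admits a Borel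
"quasi-projection" `P : X → X`: `P x ∈ U` always, `P x = x` on `U`, and
`d(x, P x) ≤ 2 · dist(x, U)`. -/
theorem stmt9 {X : Type*} [MetricSpace X] [TopologicalSpace.SeparableSpace X]
    [MeasurableSpace X] [BorelSpace X]
    (U : Set X) (hU : IsClosed U) (hUne : U.Nonempty) :
    ∃ P : X → X, Measurable P ∧ (∀ x, P x ∈ U) ∧ (∀ x ∈ U, P x = x) ∧
      ∀ x, dist x (P x) ≤ 2 * infDist x U := by
  classical
  haveI : Nonempty (↥U) := hUne.to_subtype
  haveI : SecondCountableTopology X := UniformSpace.secondCountable_of_separable X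
  obtain ⟨u, hu⟩ : ∃ u : ℕ → ↥U, DenseRange u :=
    ⟨TopologicalSpace.denseSeq ↥U, TopologicalSpace.denseRange_denseSeq ↥U⟩
  set D : X → ℕ → Prop := fun x n => dist x (u n : X) < 2 * infDist x U with hD
  have hex : ∀ x ∉ U, ∃ n, D x n := by
    intro x hx
    have hr : 0 < infDist x U := (hU.notMem_iff_infDist_pos hUne).1 hx
    obtain ⟨y, hyU, hy⟩ : ∃ y ∈ U, dist x y < 2 * infDist x U := by
      rw [← infDist_lt_iff hUne]; linarith
    have hε : 0 < 2 * infDist x U - dist x y := by linarith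
    obtain ⟨n, hn⟩ := Metric.denseRange_iff.1 hu ⟨y, hyU⟩ _ hε
    rw [Subtype.dist_eq] at hn
    refine ⟨n, ?_⟩
    calc dist x (u n : X) ≤ dist x y + dist y (u n : X) := dist_triangle _ _ _
      _ < 2 * infDist x U := by linarith
  set N : X → ℕ := fun x => if h : ∃ n, D x n then Nat.find h else 0 with hN
  have hDmeas : ∀ n, MeasurableSet {x | D x n} := by
    intro n
    have : IsOpen {x | D x n} := by
      apply isOpen_lt (continuous_id.dist continuous_const)
        (continuous_const.mul (continuous_infDist_pt U))
    exact this.measurableSet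
  have hnone : MeasurableSet {y | ¬ ∃ n, D y n} := by
    have : {y | ¬∃ n, D y n} = ⋂ n, {y | D y n}ᶜ := by ext y; simp
    rw [this]; exact MeasurableSet.iInter fun n => (hDmeas n).compl
  have hNpre : ∀ n, MeasurableSet (N ⁻¹' {n}) := by
    intro n
    have heq : N ⁻¹' {n} =
        ({y | D y n} ∩ ⋂ m ∈ Finset.range n, {y | D y m}ᶜ) ∪
          ({y | ¬ ∃ k, D y k} ∩ if n = 0 then univ else ∅) := by
      ext y
      simp only [mem_preimage, mem_singleton_iff, mem_union, mem_inter_iff, mem_iInter,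
        Finset.mem_range, mem_compl_iff, mem_setOf_eq, hN]
      by_cases hyex : ∃ k, D y k
      · rw [dif_pos hyex]
        simp only [hyex, not_true_eq_false, false_and, or_false]
        exact Nat.find_eq_iff hyex
      · rw [dif_neg hyex]
        simp only [hyex, not_false_eq_true, true_and]
        constructor
        · rintro rfl; simp
        · rintro (⟨h0, -⟩ | h0)
          · exact absurd ⟨n, h0⟩ hyex
          · by_contra hne
            rw [if_neg (Ne.symm hne)] at h0
            exact h0
    rw [heq]
    refine ((hDmeas n).inter (MeasurableSet.biInter (to_countable _)
      fun m _ => (hDmeas m).compl)).union (hnone.inter ?_)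
    split <;> simp
  have hNmeas : Measurable N := measurable_to_nat fun x => hNpre (N x)
  set g : X → X := fun x => (u (N x) : X) with hg
  have hgmeas : Measurable g := (measurable_from_nat (f := fun n => (u n : X))).comp hNmeas
  refine ⟨U.piecewise id g, ?_, ?_, ?_, ?_⟩
  · exact Measurable.piecewise hU.measurableSet measurable_id hgmeas
  · intro x
    by_cases hx : x ∈ U
    · simp [piecewise, hx]
    · simp only [piecewise, hx, if_false]
      exact (u (N x)).2
  · intro x hx; simp [piecewise, hx]
  · intro x
    by_cases hx : x ∈ U
    · simp only [piecewise, hx, if_true, id, dist_self]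
      have := infDist_nonneg (s := U) (x := x)
      linarith
    · simp only [piecewise, hx, if_false]
      have hxe := hex x hx
      have hNx : N x = Nat.find hxe := by simp [hN, hxe]
      have hspec : D x (N x) := hNx ▸ Nat.find_spec hxe
      exact le_of_lt hspec
end
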